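/- Let n ≥ 1 be an integer, l ≥ 0 a real number, and u₁ ∈ H^{l}(ℝⁿ). Then there exists a constant C > 0, depending only on n and l, such that for all t ≥ 0, ∫_{|ξ| ≥ 1} | û₁(ξ)·( e^{−t/(2(1+|ξ|²))} − e^{−t/(2|ξ|²)} )·sin(t|ξ|)/|ξ| |² dξ ≤ C·‖u₁‖²_{H^l}·(1+t)^{−l−3}. -/

import Mathlib

open MeasureTheory Real Set

noncomputable section

namespace DampedPlate

variable {n : ℕ}

/-- `ℝⁿ` as a Euclidean space. -/
abbrev Rn (n : ℕ) := EuclideanSpace ℝ (Fin n)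

/-- The Fourier transform `f̂(ξ) = ∫ f(x) e^{-i ξ·x} dx` of a real-valued function. -/
def ftr (f : Rn n → ℝ) (ξ : Rn n) : ℂ :=
  ∫ x : Rn n, (f x : ℂ) * Complex.exp (-Complex.I * ((inner ℝ ξ x : ℝ) : ℂ))

/-- The multiplier `E₀(t,ξ)`. -/
def E0 (ζ t : ℝ) (ξ : Rn n) : ℝ :=
  if ζ < ‖ξ‖ then
    Real.exp (-t / (2 * (1 + ‖ξ‖ ^ 2))) *
      Real.cos (t * Real.sqrt (4 * ‖ξ‖ ^ 2 * (1 + ‖ξ‖ ^ 2) ^ 2 - 1) / (2 * (1 + ‖ξ‖ ^ 2)))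
  else
    Real.exp (-t / (2 * (1 + ‖ξ‖ ^ 2))) *
      Real.cosh (t * Real.sqrt (1 - 4 * ‖ξ‖ ^ 2 * (1 + ‖ξ‖ ^ 2) ^ 2) / (2 * (1 + ‖ξ‖ ^ 2)))

/-- The multiplier `E₁(t,ξ)`. -/
def E1 (ζ t : ℝ) (ξ : Rn n) : ℝ :=
  if ζ < ‖ξ‖ then
    Real.exp (-t / (2 * (1 + ‖ξ‖ ^ 2))) *
      (Real.sin (t * Real.sqrt (4 * ‖ξ‖ ^ 2 * (1 + ‖ξ‖ ^ 2) ^ 2 - 1) / (2 * (1 + ‖ξ‖ ^ 2))) /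
        (Real.sqrt (4 * ‖ξ‖ ^ 2 * (1 + ‖ξ‖ ^ 2) ^ 2 - 1) / (2 * (1 + ‖ξ‖ ^ 2))))
  else
    Real.exp (-t / (2 * (1 + ‖ξ‖ ^ 2))) *
      (Real.sinh (t * Real.sqrt (1 - 4 * ‖ξ‖ ^ 2 * (1 + ‖ξ‖ ^ 2) ^ 2) / (2 * (1 + ‖ξ‖ ^ 2))) /
        (Real.sqrt (1 - 4 * ‖ξ‖ ^ 2 * (1 + ‖ξ‖ ^ 2) ^ 2) / (2 * (1 + ‖ξ‖ ^ 2))))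

/-- The Fourier transform of the solution, expressed in terms of the Fourier transforms
`v₀ = û₀`, `v₁ = û₁` of the initial data:
`û(t,ξ) = û₀(ξ)E₀(t,ξ) + (û₁(ξ) + û₀(ξ)/(2(1+|ξ|²))) E₁(t,ξ)`. -/
def uhatC (ζ : ℝ) (v₀ v₁ : Rn n → ℂ) (t : ℝ) (ξ : Rn n) : ℂ :=
  v₀ ξ * ((E0 ζ t ξ : ℝ) : ℂ) +
    (v₁ ξ + v₀ ξ * (((1 : ℝ) / (2 * (1 + ‖ξ‖ ^ 2)) : ℝ) : ℂ)) * ((E1 ζ t ξ : ℝ) : ℂ)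

/-- The Fourier transform of the solution of the damped plate equation with data `u₀, u₁`. -/
def uhat (ζ : ℝ) (u₀ u₁ : Rn n → ℝ) (t : ℝ) (ξ : Rn n) : ℂ :=
  uhatC ζ (ftr u₀) (ftr u₁) t ξ

/-- The wave-like profile
`û₁(ξ) e^{-t/(2|ξ|²)} sin(t|ξ|)/|ξ| + û₀(ξ) e^{-t/(2|ξ|²)} cos(t|ξ|)`,
in terms of the Fourier transforms of the data. -/
def waveC (v₀ v₁ : Rn n → ℂ) (t : ℝ) (ξ : Rn n) : ℂ :=
  v₁ ξ * ((Real.exp (-t / (2 * ‖ξ‖ ^ 2)) * (Real.sin (t * ‖ξ‖) / ‖ξ‖) : ℝ) : ℂ) +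
    v₀ ξ * ((Real.exp (-t / (2 * ‖ξ‖ ^ 2)) * Real.cos (t * ‖ξ‖) : ℝ) : ℂ)

/-- The wave-like profile for real data `u₀, u₁`. -/
def wave (u₀ u₁ : Rn n → ℝ) (t : ℝ) (ξ : Rn n) : ℂ := waveC (ftr u₀) (ftr u₁) t ξ

/-- Membership in `H^l`, expressed on the Fourier side. -/
def MemHC (l : ℝ) (v : Rn n → ℂ) : Prop :=
  Integrable fun ξ : Rn n => (1 + ‖ξ‖ ^ 2) ^ l * ‖v ξ‖ ^ 2

/-- The `H^l` norm, expressed on the Fourier side. -/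
def HNormC (l : ℝ) (v : Rn n → ℂ) : ℝ :=
  (∫ ξ : Rn n, (1 + ‖ξ‖ ^ 2) ^ l * ‖v ξ‖ ^ 2) ^ ((1 : ℝ) / 2)

/-- `f ∈ H^l(ℝⁿ)`. -/
def MemH (l : ℝ) (f : Rn n → ℝ) : Prop := MemHC l (ftr f)

/-- `‖f‖_{H^l}`. -/
def HNorm (l : ℝ) (f : Rn n → ℝ) : ℝ := HNormC l (ftr f)

/-- `‖f‖_{1,1} = ∫ (1+|x|)|f(x)| dx`. -/
def Norm11 (f : Rn n → ℝ) : ℝ := ∫ x : Rn n, (1 + ‖x‖) * |f x|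

/-- `f ∈ L^{1,1}(ℝⁿ)`. -/
def MemL11 (f : Rn n → ℝ) : Prop :=
  Integrable f ∧ Integrable fun x : Rn n => (1 + ‖x‖) * |f x|

/-- `P_j = ∫ u_j(x) dx`. -/
def Pint (f : Rn n → ℝ) : ℝ := ∫ x : Rn n, f x

/-- `I₀ = ‖u₁‖_{H^l} + ‖u₀‖_{H^{l+1}} + ‖u₁‖_{1,1} + ‖u₀‖_{1,1}`. -/
def I0 (l : ℝ) (u₀ u₁ : Rn n → ℝ) : ℝ :=
  HNorm l u₁ + HNorm (l + 1) u₀ + Norm11 u₁ + Norm11 u₀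

/-- The heat-like profile `(P₁ + P₀) e^{-t|ξ|²}`. -/
def heat (u₀ u₁ : Rn n → ℝ) (t : ℝ) (ξ : Rn n) : ℂ :=
  (((Pint u₁ + Pint u₀) * Real.exp (-t * ‖ξ‖ ^ 2) : ℝ) : ℂ)

/-- `ζ` is the unique number in `(0,1)` with `4ζ²(1+ζ²)² = 1`. -/
def zetaCond (ζ : ℝ) : Prop := 0 < ζ ∧ ζ < 1 ∧ 4 * ζ ^ 2 * (1 + ζ ^ 2) ^ 2 = 1

end DampedPlate

open DampedPlate

/-!
Put `r = |ξ| ≥ 1`, `a = 1 + r²` and `s = t / a`. The two exponents differ by `t / (2r²a)`, so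
`0 ≤ e^{-t/(2a)} - e^{-t/(2r²)} ≤ e^{-t/(2a)} t / (2r²a)`, and since `a ≤ 2r²` the squared
multiplier is at most `2 s² e^{-s} / a³`. As `1 + t ≤ (1 + s) a`, the factor `s² e^{-s}` absorbs
`(1 + t)^{l+3}` at the price of `a^{l+3}`; what is left is `a^l`, the weight of the `H^l` norm.
-/

open Nat

theorem one_add_rpow_mul_exp_neg_le (p : ℝ) {s : ℝ} (hs : 0 ≤ s) :
    (1 + s) ^ p * exp (-s) ≤ exp 1 * ⌈p⌉₊ ! := by
  have hfact : (1 + s) ^ ⌈p⌉₊ ≤ ⌈p⌉₊ ! * exp (1 + s) := by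
    have := pow_div_factorial_le_exp (1 + s) (by linarith) ⌈p⌉₊
    rwa [div_le_iff₀ (by positivity), mul_comm] at this
  calc (1 + s) ^ p * exp (-s) ≤ (1 + s) ^ ⌈p⌉₊ * exp (-s) := by
        gcongr
        rw [← rpow_natCast]
        exact rpow_le_rpow_of_exponent_le (by linarith) (Nat.le_ceil p)
    _ ≤ ⌈p⌉₊ ! * exp (1 + s) * exp (-s) := by gcongr
    _ = exp 1 * ⌈p⌉₊ ! := by rw [mul_assoc, ← exp_add]; ring_nf

theorem exp_neg_sub_exp_neg_le (u v : ℝ) : exp (-u) - exp (-v) ≤ exp (-u) * (v - u) := by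
  have h := add_one_le_exp (-(v - u))
  have hv : exp (-v) = exp (-u) * exp (-(v - u)) := by rw [← exp_add]; ring_nf
  nlinarith [exp_pos (-u)]

theorem sq_expDiff_mul_sin_div_le {t r : ℝ} (ht : 0 ≤ t) (hr : 1 ≤ r) :
    ((exp (-t / (2 * (1 + r ^ 2))) - exp (-t / (2 * r ^ 2))) * (sin (t * r) / r)) ^ 2 ≤
      2 * (t / (1 + r ^ 2)) ^ 2 * exp (-(t / (1 + r ^ 2))) / (1 + r ^ 2) ^ 3 := by
  set a := 1 + r ^ 2
  have hr0 : 0 < r := by linarith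
  have ha0 : 0 < a := by positivity
  have hdiff_nonneg : 0 ≤ exp (-t / (2 * a)) - exp (-t / (2 * r ^ 2)) := by
    rw [sub_nonneg, exp_le_exp, neg_div, neg_div, neg_le_neg_iff]
    gcongr
    linarith
  have hdiff : exp (-t / (2 * a)) - exp (-t / (2 * r ^ 2)) ≤
      exp (-t / (2 * a)) * (t / (2 * r ^ 2 * a)) := by
    have := exp_neg_sub_exp_neg_le (t / (2 * a)) (t / (2 * r ^ 2))
    rw [neg_div, neg_div]
    convert this using 2
    field_simp
    ring
  have hsin : |sin (t * r) / r| ≤ 1 / r := by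
    rw [abs_div, abs_of_pos hr0]
    gcongr
    exact abs_sin_le_one _
  have hexp_sq : exp (-t / (2 * a)) ^ 2 = exp (-(t / a)) := by
    rw [← exp_nat_mul]; congr 1; field_simp; ring
  have ha3 : a ^ 3 ≤ 8 * r ^ 6 := by
    nlinarith [pow_le_pow_left₀ ha0.le (by nlinarith : a ≤ 2 * r ^ 2) 3]
  calc ((exp (-t / (2 * a)) - exp (-t / (2 * r ^ 2))) * (sin (t * r) / r)) ^ 2
      ≤ (exp (-t / (2 * a)) * (t / (2 * r ^ 2 * a)) * (1 / r)) ^ 2 := by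
        rw [← sq_abs, abs_mul, abs_of_nonneg hdiff_nonneg]
        gcongr
    _ = (t / a) ^ 2 * exp (-(t / a)) / (4 * r ^ 6) := by
        rw [mul_pow, mul_pow, hexp_sq]; field_simp; ring
    _ ≤ 2 * (t / a) ^ 2 * exp (-(t / a)) / a ^ 3 := by
        rw [div_le_div_iff₀ (by positivity) (by positivity)]
        nlinarith [mul_nonneg (sq_nonneg (t / a)) (exp_pos (-(t / a))).le]

theorem sq_div_mul_exp_neg_div_le {l t a : ℝ} (hl : -3 ≤ l) (ht : 0 ≤ t) (ha : 1 ≤ a) :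
    2 * (t / a) ^ 2 * exp (-(t / a)) / a ^ 3 ≤
      2 * (exp 1 * ⌈l + 5⌉₊ !) * (1 + t) ^ (-l - 3) * a ^ l := by
  set s := t / a with hs_def
  have ha0 : 0 < a := by linarith
  have hs : 0 ≤ s := by positivity
  have h1s : 0 < 1 + s := by linarith
  have h1t : 0 < 1 + t := by linarith
  have hts : 1 + t ≤ (1 + s) * a := by
    have : t = s * a := by rw [hs_def, div_mul_cancel₀ t ha0.ne']
    nlinarith
  have hs2 : s ^ 2 ≤ (1 + s) ^ (2 : ℝ) := by
    rw [rpow_two]; nlinarith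
  have hkey : s ^ 2 * exp (-s) * (1 + t) ^ (l + 3) ≤ exp 1 * ⌈l + 5⌉₊ ! * (a ^ l * a ^ 3) := by
    calc s ^ 2 * exp (-s) * (1 + t) ^ (l + 3)
        ≤ (1 + s) ^ (2 : ℝ) * exp (-s) * ((1 + s) * a) ^ (l + 3) := by
          gcongr; linarith
      _ = (1 + s) ^ (l + 5) * exp (-s) * a ^ (l + 3) := by
          rw [mul_rpow h1s.le ha0.le, show l + 5 = 2 + (l + 3) by ring, rpow_add h1s 2 (l + 3)]
          ring
      _ ≤ exp 1 * ⌈l + 5⌉₊ ! * (a ^ l * a ^ 3) := by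
          rw [rpow_add ha0, rpow_ofNat]
          exact mul_le_mul_of_nonneg_right (one_add_rpow_mul_exp_neg_le _ hs) (by positivity)
  rw [show -l - 3 = -(l + 3) by ring, rpow_neg h1t.le,
    mul_right_comm (2 * (exp 1 * ⌈l + 5⌉₊ !)), ← div_eq_mul_inv,
    div_le_div_iff₀ (by positivity) (rpow_pos_of_pos h1t _)]
  linarith

theorem setIntegral_norm_mul_ofReal_sq_le {α : Type*} [MeasurableSpace α] {μ : Measure α}
    {S : Set α} (hS : MeasurableSet S) {v : α → ℂ} {m w : α → ℝ} {K : ℝ} (hK : 0 ≤ K)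
    (hw : ∀ x, 0 ≤ w x) (hint : Integrable (fun x => w x * ‖v x‖ ^ 2) μ)
    (hm : ∀ x ∈ S, m x ^ 2 ≤ K * w x) :
    ∫ x in S, ‖v x * (m x : ℂ)‖ ^ 2 ∂μ ≤ K * ∫ x, w x * ‖v x‖ ^ 2 ∂μ := by
  have hKint := hint.const_mul K
  -- `integral_mono_of_nonneg` needs no integrability of the left side, hence none of `v`.
  calc ∫ x in S, ‖v x * (m x : ℂ)‖ ^ 2 ∂μ
      ≤ ∫ x in S, K * (w x * ‖v x‖ ^ 2) ∂μ := by
        refine integral_mono_of_nonneg (ae_of_all _ fun _ => by positivity) hKint.integrableOn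
          (ae_restrict_of_forall_mem hS fun x hx => ?_)
        dsimp only
        rw [norm_mul, Complex.norm_real, mul_pow, Real.norm_eq_abs, sq_abs]
        nlinarith [hm x hx, sq_nonneg ‖v x‖]
    _ ≤ ∫ x, K * (w x * ‖v x‖ ^ 2) ∂μ :=
        setIntegral_le_integral hKint (ae_of_all _ fun x => by have := hw x; positivity)
    _ = K * ∫ x, w x * ‖v x‖ ^ 2 ∂μ := integral_const_mul K _

theorem HNormC_sq {n : ℕ} (l : ℝ) (v : Rn n → ℂ) :
    HNormC l v ^ 2 = ∫ ξ : Rn n, (1 + ‖ξ‖ ^ 2) ^ l * ‖v ξ‖ ^ 2 := by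
  rw [HNormC, ← sqrt_eq_rpow, sq_sqrt (integral_nonneg fun ξ => by positivity)]

theorem stmt_14_general (n : ℕ) (l : ℝ) (hl : 0 ≤ l) :
    ∃ C > (0 : ℝ), ∀ v₁ : Rn n → ℂ, MemHC l v₁ →
      ∀ t : ℝ, 0 ≤ t →
        (∫ ξ in {ξ : Rn n | 1 ≤ ‖ξ‖},
            ‖v₁ ξ * (((Real.exp (-t / (2 * (1 + ‖ξ‖ ^ 2))) - Real.exp (-t / (2 * ‖ξ‖ ^ 2))) *
              (Real.sin (t * ‖ξ‖) / ‖ξ‖) : ℝ) : ℂ)‖ ^ 2) ≤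
          C * HNormC l v₁ ^ 2 * (1 + t) ^ (-l - 3) := by
  refine ⟨2 * (exp 1 * ⌈l + 5⌉₊ !), by positivity, fun v₁ hv t ht => ?_⟩
  rw [mul_right_comm, HNormC_sq]
  refine setIntegral_norm_mul_ofReal_sq_le (w := fun ξ => (1 + ‖ξ‖ ^ 2) ^ l)
    (measurableSet_le measurable_const measurable_norm) (by positivity) (fun ξ => by positivity)
    hv fun ξ (hξ : 1 ≤ ‖ξ‖) => ?_
  calc _ ≤ _ := sq_expDiff_mul_sin_div_le ht hξ
    _ ≤ _ := sq_div_mul_exp_neg_div_le (by linarith) ht (by nlinarith)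

/-- High-frequency estimate for the first term in the proof of Lemma 4.1.
Stated on the Fourier side: `v₁ = û₁ ∈ H^l`. -/
theorem stmt_14 (n : ℕ) (hn : 1 ≤ n) (l : ℝ) (hl : 0 ≤ l) :
    ∃ C > (0 : ℝ), ∀ v₁ : Rn n → ℂ, MemHC l v₁ →
      ∀ t : ℝ, 0 ≤ t →
        (∫ ξ in {ξ : Rn n | 1 ≤ ‖ξ‖},
            ‖v₁ ξ * (((Real.exp (-t / (2 * (1 + ‖ξ‖ ^ 2))) - Real.exp (-t / (2 * ‖ξ‖ ^ 2))) *
              (Real.sin (t * ‖ξ‖) / ‖ξ‖) : ℝ) : ℂ)‖ ^ 2) ≤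
          C * HNormC l v₁ ^ 2 * (1 + t) ^ (-l - 3) :=
  stmt_14_general n l hl
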